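/- Let μ ∈ (2,3) and x₀ ∈ (0,1). Then the trajectory x_k = f_μ^[k](x₀) of the logistic map converges to 1 − 1/μ as k → ∞, and since 1 − 1/μ > 1/2 there exists N such that x_k > 1/2 for all k ≥ N (so the digitised trajectory is eventually the all-one string). -/

import Mathlib

open Filter Topology Function Set

/-!
In the coordinate `a = μ (x - (1 - 1/μ))` the logistic map becomes `a ↦ -a (a + t)` with
`t = μ - 2 ∈ (0, 1)`, and `(0, 1)` becomes `(-(1 + t), 1)`. On `[-t, 0]`, i.e. for
`x ∈ [1/μ, 1 - 1/μ]`, the second iterate contracts towards `0` with ratio `t²`. Every orbit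
enters `[-t, 0]`: a point of `(0, 1)` is mapped into `(-(1 + t), 0)`, and while the orbit stays
below `-t` each step raises it by at least `t (a₀ + 1 + t) > 0`.
-/

def centredLogistic (t a : ℝ) : ℝ := -a * (a + t)

lemma logistic_semiconj_centredLogistic {μ : ℝ} (hμ : μ ≠ 0) :
    Semiconj (fun x => μ * (x - (1 - 1 / μ))) (fun x => μ * x * (1 - x))
      (centredLogistic (μ - 2)) := by
  intro x
  simp only [centredLogistic]
  field_simp
  ring

section

variable {t a : ℝ}

lemma centredLogistic_nonneg_of_mem_Icc (ha : a ∈ Icc (-t) 0) : 0 ≤ centredLogistic t a :=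
  mul_nonneg (by linarith [ha.2]) (by linarith [ha.1])

lemma abs_centredLogistic_le_of_mem_Icc (ht : t ≤ 1) (ha : a ∈ Icc (-t) 0) :
    |centredLogistic t a| ≤ |a| := by
  rw [centredLogistic, neg_mul, abs_neg, abs_mul, abs_of_nonneg (by linarith [ha.1] : 0 ≤ a + t)]
  exact mul_le_of_le_one_right (abs_nonneg a) (by linarith [ha.2])

lemma abs_centredLogistic_centredLogistic_le (ht : t ≤ 1) (ha : a ∈ Icc (-t) 0) :
    |centredLogistic t (centredLogistic t a)| ≤ t ^ 2 * |a| := by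
  obtain ⟨hta, ha0⟩ := ha
  set b := centredLogistic t a with hb
  have hb0 : 0 ≤ b := centredLogistic_nonneg_of_mem_Icc ⟨hta, ha0⟩
  have key : (a + t) * (b + t) ≤ t ^ 2 := by
    have hsq : (a + t) ^ 2 ≤ t := by nlinarith
    have : t ^ 2 - (a + t) * (b + t) = -a * (t - (a + t) ^ 2) := by rw [hb, centredLogistic]; ring
    nlinarith [mul_nonneg (neg_nonneg.mpr ha0) (sub_nonneg.mpr hsq)]
  rw [centredLogistic, neg_mul, abs_neg, abs_of_nonneg (mul_nonneg hb0 (by linarith)),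
    abs_of_nonpos ha0]
  calc b * (b + t) = -a * ((a + t) * (b + t)) := by rw [hb, centredLogistic]; ring
    _ ≤ -a * t ^ 2 := mul_le_mul_of_nonneg_left key (by linarith)
    _ = t ^ 2 * -a := mul_comm _ _

lemma centredLogistic_centredLogistic_mem_Icc (ht : t ≤ 1) (ha : a ∈ Icc (-t) 0) :
    centredLogistic t (centredLogistic t a) ∈ Icc (-t) 0 := by
  have hb0 := centredLogistic_nonneg_of_mem_Icc ha
  have habs := abs_centredLogistic_centredLogistic_le ht ha
  rw [abs_of_nonpos ha.2] at habs
  have ht0 : 0 ≤ t := by linarith [ha.1, ha.2]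
  constructor
  · nlinarith [neg_abs_le (centredLogistic t (centredLogistic t a)), ha.1]
  · exact mul_nonpos_of_nonpos_of_nonneg (by linarith) (by linarith)

lemma abs_centredLogistic_iterate_le (ht : t ≤ 1) (ha : a ∈ Icc (-t) 0) (k : ℕ) :
    |(centredLogistic t)^[k] a| ≤ (t ^ 2) ^ (k / 2) * |a| := by
  have even : ∀ n, (centredLogistic t)^[2 * n] a ∈ Icc (-t) 0 ∧
      |(centredLogistic t)^[2 * n] a| ≤ (t ^ 2) ^ n * |a| := by
    intro n
    induction n with
    | zero => simpa using ha
    | succ n ih =>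
      rw [show 2 * (n + 1) = 2 * n + 1 + 1 by ring, iterate_succ_apply', iterate_succ_apply']
      refine ⟨centredLogistic_centredLogistic_mem_Icc ht ih.1, ?_⟩
      calc _ ≤ t ^ 2 * |(centredLogistic t)^[2 * n] a| :=
            abs_centredLogistic_centredLogistic_le ht ih.1
        _ ≤ t ^ 2 * ((t ^ 2) ^ n * |a|) := by gcongr; exact ih.2
        _ = (t ^ 2) ^ (n + 1) * |a| := by ring
  obtain ⟨n, rfl | rfl⟩ := Nat.even_or_odd' k
  · rw [Nat.mul_div_cancel_left n two_pos]
    exact (even n).2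
  · rw [show (2 * n + 1) / 2 = n by omega, iterate_succ_apply']
    exact (abs_centredLogistic_le_of_mem_Icc ht (even n).1).trans (even n).2

lemma tendsto_centredLogistic_iterate_of_mem_Icc (ht : t < 1) (ha : a ∈ Icc (-t) 0) :
    Tendsto (fun k => (centredLogistic t)^[k] a) atTop (𝓝 0) := by
  have ht0 : 0 ≤ t := by linarith [ha.1, ha.2]
  have hpow : Tendsto (fun k : ℕ => (t ^ 2) ^ (k / 2) * |a|) atTop (𝓝 0) := by
    simpa using ((tendsto_pow_atTop_nhds_zero_of_lt_one (sq_nonneg t) (by nlinarith)).comp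
      (Nat.tendsto_div_const_atTop two_ne_zero)).mul_const |a|
  exact squeeze_zero_norm (abs_centredLogistic_iterate_le ht.le ha) hpow

lemma exists_centredLogistic_iterate_mem_Icc_of_mem_Ioc (ht : 0 < t) (ha : a ∈ Ioc (-(1 + t)) 0) :
    ∃ m, (centredLogistic t)^[m] a ∈ Icc (-t) 0 := by
  by_contra! hout
  have below : ∀ m, (centredLogistic t)^[m] a ≤ 0 → (centredLogistic t)^[m] a < -t :=
    fun m hm => by simpa [hm] using hout m
  set δ := t * (a + 1 + t)
  have hδ : 0 < δ := mul_pos ht (by linarith [ha.1])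
  have gain : ∀ n : ℕ,
      a + n * δ ≤ (centredLogistic t)^[n] a ∧ (centredLogistic t)^[n] a < -t := by
    intro n
    induction n with
    | zero => simpa using below 0 ha.2
    | succ n ih =>
      set y := (centredLogistic t)^[n] a
      have hay : a ≤ y := by nlinarith [ih.1, hδ, (Nat.cast_nonneg n : (0 : ℝ) ≤ n)]
      have hstep : y + δ ≤ centredLogistic t y := by
        rw [centredLogistic]
        nlinarith [mul_nonneg (by linarith [ih.2] : 0 ≤ -y - t)
            (by linarith [ha.1] : 0 ≤ y + 1 + t),
          mul_nonneg ht.le (sub_nonneg.mpr hay)]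
      have hneg : centredLogistic t y < 0 :=
        mul_neg_of_pos_of_neg (by linarith [ih.2]) (by linarith [ih.2])
      have hsucc : (centredLogistic t)^[n + 1] a = centredLogistic t y := iterate_succ_apply' _ _ _
      refine ⟨?_, below (n + 1) (hsucc ▸ hneg.le)⟩
      rw [hsucc]
      push_cast
      linarith [ih.1]
  obtain ⟨n, hn⟩ := exists_nat_gt ((-t - a) / δ)
  rw [div_lt_iff₀ hδ] at hn
  linarith [gain n]

lemma exists_centredLogistic_iterate_mem_Icc (ht : 0 < t) (ha : a ∈ Ioo (-(1 + t)) 1) :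
    ∃ m, (centredLogistic t)^[m] a ∈ Icc (-t) 0 := by
  rcases le_or_gt a 0 with ha0 | ha0
  · exact exists_centredLogistic_iterate_mem_Icc_of_mem_Ioc ht ⟨ha.1, ha0⟩
  · have hmem : centredLogistic t a ∈ Ioc (-(1 + t)) 0 := by
      rw [centredLogistic]
      constructor <;> nlinarith [ha.2]
    obtain ⟨m, hm⟩ := exists_centredLogistic_iterate_mem_Icc_of_mem_Ioc ht hmem
    exact ⟨m + 1, by rwa [iterate_succ_apply]⟩

theorem tendsto_centredLogistic_iterate (ht0 : 0 < t) (ht1 : t < 1) (ha : a ∈ Ioo (-(1 + t)) 1) :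
    Tendsto (fun k => (centredLogistic t)^[k] a) atTop (𝓝 0) := by
  obtain ⟨m, hm⟩ := exists_centredLogistic_iterate_mem_Icc ht0 ha
  rw [← tendsto_add_atTop_iff_nat m]
  simpa only [iterate_add_apply] using tendsto_centredLogistic_iterate_of_mem_Icc ht1 hm

end

theorem tendsto_logistic_iterate {μ x₀ : ℝ} (hμ2 : 2 < μ) (hμ3 : μ < 3)
    (hx : x₀ ∈ Ioo 0 1) :
    Tendsto (fun k => (fun x => μ * x * (1 - x))^[k] x₀) atTop (𝓝 (1 - 1 / μ)) := by
  have hμ : μ ≠ 0 := by positivity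
  have hstart : μ * (x₀ - (1 - 1 / μ)) ∈ Ioo (-(1 + (μ - 2))) 1 := by
    have : μ * (x₀ - (1 - 1 / μ)) = μ * x₀ - μ + 1 := by field_simp; ring
    rw [this]
    constructor <;> nlinarith [hx.1, hx.2]
  have h := ((tendsto_centredLogistic_iterate (by linarith) (by linarith) hstart).div_const
    μ).add_const (1 - 1 / μ)
  rw [zero_div, zero_add] at h
  refine h.congr fun k => ?_
  rw [← (logistic_semiconj_centredLogistic hμ).iterate_right k x₀, mul_div_cancel_left₀ _ hμ,
    sub_add_cancel]

/-- For μ ∈ (2,3) and x₀ ∈ (0,1), the logistic map trajectory converges to 1 - 1/μ,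
which exceeds 1/2, and the trajectory is eventually above the threshold 1/2. -/
theorem logistic_mu_two_three_tendsto_fixed_point
    (μ : ℝ) (hμ2 : 2 < μ) (hμ3 : μ < 3) (x₀ : ℝ) (hx0 : 0 < x₀) (hx1 : x₀ < 1) :
    Tendsto (fun k => (fun x => μ * x * (1 - x))^[k] x₀) atTop (𝓝 (1 - 1/μ)) ∧
      1 - 1/μ > 1/2 ∧
      ∃ N : ℕ, ∀ k ≥ N, (fun x => μ * x * (1 - x))^[k] x₀ > 1/2 := by
  have hlim := tendsto_logistic_iterate hμ2 hμ3 ⟨hx0, hx1⟩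
  have hhalf : 1 - 1 / μ > 1 / 2 := by
    have : 1 / μ < 1 / 2 := one_div_lt_one_div_of_lt two_pos hμ2
    linarith
  exact ⟨hlim, hhalf, eventually_atTop.mp (hlim.eventually (eventually_gt_nhds hhalf))⟩
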